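/- Let $\lambda : A \times A \to (M, *)$ be a hermitian form. Then $(M \times_\lambda A, M, h_\lambda, p_\lambda)$ is a quadratic group: $p_\lambda$ and $h_\lambda$ are group homomorphisms, the image of $p_\lambda$ lies in the center of $M \times_\lambda A$, and $h_\lambda \circ p_\lambda \circ h_\lambda = 2 h_\lambda$. Moreover it is a quadratic refinement of $(M, *)$: $h_\lambda(p_\lambda(m)) - m = m^*$ for all $m \in M$. -/

import Mathlib

namespace CST

variable {A M : Type*} [AddCommGroup A] [AddCommGroup M]

/-- The underlying type of the central extension `M ×_lam A` determined by a
bilinear map `lam : A × A → M`. -/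
def Ext (lam : A →+ A →+ M) : Type _ := M × A

namespace Ext

variable (lam : A →+ A →+ M)

/-- The element of `M ×_lam A` given by the pair `(m, a)`. -/
def mkE (m : M) (a : A) : Ext lam := (m, a)

instance : Add (Ext lam) :=
  ⟨fun x y => (x.1 + y.1 - lam x.2 y.2, x.2 + y.2)⟩

instance : Zero (Ext lam) := ⟨((0 : M), (0 : A))⟩

instance : Neg (Ext lam) :=
  ⟨fun x => (-x.1 - lam x.2 x.2, -x.2)⟩

theorem add_def (x y : Ext lam) :
    x + y = (x.1 + y.1 - lam x.2 y.2, x.2 + y.2) := rfl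

theorem zero_def : (0 : Ext lam) = ((0 : M), (0 : A)) := rfl

theorem neg_def (x : Ext lam) : -x = (-x.1 - lam x.2 x.2, -x.2) := rfl

/-- The operation `(m, a) + (m', a') = (m + m' - lam a a', a + a')` makes
`M ×_lam A` into a group. -/
instance : AddGroup (Ext lam) :=
  AddGroup.ofLeftAxioms
    (by
      intro x y z
      refine Prod.ext ?_ ?_
      · show x.1 + y.1 - lam x.2 y.2 + z.1 - lam (x.2 + y.2) z.2 =
          x.1 + (y.1 + z.1 - lam y.2 z.2) - lam x.2 (y.2 + z.2)
        simp only [map_add, AddMonoidHom.add_apply]; abel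
      · show x.2 + y.2 + z.2 = x.2 + (y.2 + z.2)
        abel)
    (by
      intro x
      refine Prod.ext ?_ ?_
      · show (0 : M) + x.1 - lam 0 x.2 = x.1
        simp
      · show (0 : A) + x.2 = x.2
        simp)
    (by
      intro x
      refine Prod.ext ?_ ?_
      · show -x.1 - lam x.2 x.2 + x.1 - lam (-x.2) x.2 = 0
        simp only [map_neg, AddMonoidHom.neg_apply]; abel
      · show -x.2 + x.2 = 0
        simp)

/-- The function `h_lam (m, a) = m + m^* + lam a a`. -/
def hfun (star : M →+ M) : Ext lam → M :=
  fun x => x.1 + star x.1 + lam x.2 x.2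

/-- The function `p_lam m = (m, 0)`. -/
def pfun : M → Ext lam := fun m => mkE lam m 0

/-- The function `mu_lam a = (0, a)`. -/
def mufun : A → Ext lam := fun a => mkE lam 0 a

/-- The set of relations `(m^*, -a) - (m, a)` in `M ×_lam A`. -/
def relSet (star : M →+ M) : Set (Ext lam) :=
  {x | ∃ (m : M) (a : A), x = mkE lam (star m) (-a) - mkE lam m a}

end Ext

open Ext

/-! The cocycle `lam` vanishes as soon as one argument is `0`, so `p` embeds `M` as a central
subgroup. In `h (x + y)` the cocycle contributes `-lam a a' - (lam a a')^*`, which hermitian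
symmetry turns into exactly the cross terms `-lam a a' - lam a' a` of `lam (a + a') (a + a')`,
so `h` is additive. Finally `h` takes values fixed by `*`, whence
`h (p (h x)) = h x + (h x)^* = 2 h x`. -/

namespace Ext

variable (lam : A →+ A →+ M) (star : M →+ M)

theorem pfun_add (m m' : M) : pfun lam (m + m') = pfun lam m + pfun lam m' := by
  show ((m + m', 0) : M × A) = (m + m' - lam 0 0, 0 + 0)
  simp

theorem pfun_add_comm (m : M) (x : Ext lam) : pfun lam m + x = x + pfun lam m := by
  show ((m + x.1 - lam 0 x.2, 0 + x.2) : M × A) = (x.1 + m - lam x.2 0, x.2 + 0)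
  simp [add_comm]

theorem hfun_pfun (m : M) : hfun lam star (pfun lam m) = m + star m := by
  simp [hfun, pfun, mkE]

variable {lam star}

theorem hfun_add (herm : ∀ a a' : A, lam a' a = star (lam a a')) (x y : Ext lam) :
    hfun lam star (x + y) = hfun lam star x + hfun lam star y := by
  simp only [hfun, add_def, map_add, map_sub, AddMonoidHom.add_apply, ← herm]
  abel

theorem star_hfun (star_star : ∀ m : M, star (star m) = m)
    (herm : ∀ a a' : A, lam a' a = star (lam a a')) (x : Ext lam) :
    star (hfun lam star x) = hfun lam star x := by
  simp only [hfun, map_add, star_star, ← herm]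
  abel

end Ext

/-- For a hermitian form `lam`, the data
`(M ×_lam A, M, h_lam, p_lam)` is a quadratic group refining `(M, *)`. -/
theorem ext_quadratic_group (lam : A →+ A →+ M) (star : M →+ M)
    (star_star : ∀ m : M, star (star m) = m)
    (herm : ∀ a a' : A, lam a' a = star (lam a a')) :
    (∀ m m' : M, pfun lam (m + m') = pfun lam m + pfun lam m') ∧
    (∀ x y : Ext lam,
      hfun lam star (x + y) = hfun lam star x + hfun lam star y) ∧
    (∀ (m : M) (x : Ext lam), pfun lam m + x = x + pfun lam m) ∧
    (∀ x : Ext lam,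
      hfun lam star (pfun lam (hfun lam star x)) = 2 • hfun lam star x) ∧
    (∀ m : M, hfun lam star (pfun lam m) - m = star m) := by
  refine ⟨pfun_add lam, hfun_add herm, pfun_add_comm lam, fun x => ?_, fun m => ?_⟩
  · rw [hfun_pfun, star_hfun star_star herm, two_smul]
  · rw [hfun_pfun, add_sub_cancel_left]

end CST
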